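/- arXiv:1611.03760 — 2 statements merged into one kernel-verified Lean document; each statement's English description precedes it below -/
import Mathlib

section
/- For every real x ≥ 0, exp(-x) = (4π)^{-1/2} ∫₀^∞ t^{-3/2} exp(-1/(4t) - t x²) dt. -/
open Real Set MeasureTheory

lemma phi_hasDeriv (x t : ℝ) (ht : 0 < t) :
    HasDerivAt (fun s => x * Real.sqrt s - 1/(2*Real.sqrt s))
      (x/(2*Real.sqrt t) + 1/(4*t*Real.sqrt t)) t := by
  have hst : 0 < Real.sqrt t := Real.sqrt_pos.2 ht
  have h1 : HasDerivAt Real.sqrt (1/(2*Real.sqrt t)) t := Real.hasDerivAt_sqrt ht.ne'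
  have h2 : HasDerivAt (fun s => x * Real.sqrt s) (x * (1/(2*Real.sqrt t))) t := h1.const_mul x
  have h3 : HasDerivAt (fun s => 2 * Real.sqrt s) (2 * (1/(2*Real.sqrt t))) t := h1.const_mul 2
  have hne : 2 * Real.sqrt t ≠ 0 := by positivity
  have h4 : HasDerivAt (fun s => (2*Real.sqrt s)⁻¹)
      (-(2*(1/(2*Real.sqrt t))) / (2*Real.sqrt t)^2) t := h3.inv hne
  have h5 := h2.sub h4
  simp only [one_div]
  have heq : x/(2*Real.sqrt t) + 1/(4*t*Real.sqrt t)
      = x * (1/(2*Real.sqrt t)) - -(2*(1/(2*Real.sqrt t))) / (2*Real.sqrt t)^2 := by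
    have hu : t = Real.sqrt t ^ 2 := (Real.sq_sqrt ht.le).symm
    field_simp
    ring_nf
    linear_combination (-4) * hu
  simp only [one_div] at heq
  rw [heq]
  simp only [one_div] at h5; exact h5

lemma phi_injOn (x : ℝ) (hx : 0 ≤ x) :
    InjOn (fun t => x * Real.sqrt t - 1/(2*Real.sqrt t)) (Ioi 0) := by
  have hmono : StrictMonoOn (fun t => x * Real.sqrt t - 1/(2*Real.sqrt t)) (Ioi 0) := by
    apply StrictMonoOn.mono (s := Ioi 0) ?_ le_rfl
    apply strictMonoOn_of_deriv_pos (convex_Ioi 0)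
    · intro t ht
      exact ((phi_hasDeriv x t ht).continuousAt).continuousWithinAt
    · intro t ht
      rw [interior_Ioi] at ht
      have ht0 : (0:ℝ) < t := ht
      rw [(phi_hasDeriv x t ht).deriv]
      have h1 : 0 < Real.sqrt t := Real.sqrt_pos.2 ht
      have h2 : 0 ≤ x/(2*Real.sqrt t) := div_nonneg hx (by positivity)
      have h3 : 0 < 1/(4*t*Real.sqrt t) := by positivity
      linarith
  exact hmono.injOn

lemma phi_image_pos (x : ℝ) (hx : 0 < x) :
    (fun t => x * Real.sqrt t - 1/(2*Real.sqrt t)) '' Ioi 0 = univ := by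
  apply eq_univ_of_forall
  intro u
  set s := Real.sqrt (u^2 + 2*x) with hs
  have hs0 : 0 ≤ u^2 + 2*x := by positivity
  have hs2 : s^2 = u^2 + 2*x := Real.sq_sqrt hs0
  have habs : |u| < s := by
    rw [hs, ← Real.sqrt_sq_eq_abs]
    exact Real.sqrt_lt_sqrt (sq_nonneg u) (by linarith)
  have hr0 : 0 < (u + s)/(2*x) := by
    apply div_pos _ (by linarith)
    have := neg_abs_le u
    linarith
  set r := (u + s)/(2*x) with hrdef
  refine ⟨r^2, mem_Ioi.2 (by positivity), ?_⟩
  have hsr : Real.sqrt (r^2) = r := Real.sqrt_sq hr0.le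
  simp only [hsr]
  have hx' : x ≠ 0 := hx.ne'
  have hus : u + s ≠ 0 := by have := neg_abs_le u; nlinarith
  rw [hrdef]
  field_simp
  nlinarith [hs2]

lemma phi_image_zero :
    (fun t => (0:ℝ) * Real.sqrt t - 1/(2*Real.sqrt t)) '' Ioi 0 = Iio 0 := by
  ext u
  simp only [mem_image, mem_Ioi, mem_Iio, zero_mul, zero_sub]
  constructor
  · rintro ⟨t, ht, rfl⟩
    have h1 : 0 < Real.sqrt t := Real.sqrt_pos.2 ht
    have : 0 < 1/(2*Real.sqrt t) := by positivity
    linarith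
  · intro hu
    refine ⟨1/(4*u^2), mem_Ioi.2 (div_pos one_pos (by nlinarith [mul_pos_of_neg_of_neg hu hu] : (0:ℝ) < 4*u^2)), ?_⟩
    have h1 : Real.sqrt (1/(4*u^2)) = 1/(2*(-u)) := by
      rw [show (1:ℝ)/(4*u^2) = (1/(2*(-u)))^2 by field_simp; ring]
      exact Real.sqrt_sq (le_of_lt (div_pos one_pos (by linarith)))
    rw [h1]
    field_simp

lemma psi_eq (x : ℝ) (hx : 0 < x) :
    ∫ t in Ioi (0:ℝ), 1/(t*Real.sqrt t) * Real.exp (-(x*Real.sqrt t - 1/(2*Real.sqrt t))^2)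
      = ∫ t in Ioi (0:ℝ), 2*x/Real.sqrt t * Real.exp (-(x*Real.sqrt t - 1/(2*Real.sqrt t))^2) := by
  set ψ : ℝ → ℝ := fun t => 1/(4*x^2) * t⁻¹ with hψ
  have himg : ψ '' Ioi 0 = Ioi 0 := by
    ext s
    simp only [mem_image, mem_Ioi, hψ]
    constructor
    · rintro ⟨t, ht, rfl⟩; positivity
    · intro hs
      refine ⟨1/(4*x^2) * s⁻¹, by positivity, ?_⟩
      field_simp
  have hderiv : ∀ t ∈ Ioi (0:ℝ), HasDerivWithinAt ψ (1/(4*x^2) * (-(t^2)⁻¹)) (Ioi 0) t := by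
    intro t ht
    exact ((hasDerivAt_inv (ne_of_gt ht)).const_mul (1/(4*x^2))).hasDerivWithinAt
  have hinj : InjOn ψ (Ioi 0) := by
    intro a ha b hb h
    simp only [hψ] at h
    have ha' : (a:ℝ) ≠ 0 := ne_of_gt ha
    have hb' : (b:ℝ) ≠ 0 := ne_of_gt hb
    field_simp at h
    linarith
  have key := integral_image_eq_integral_abs_deriv_smul measurableSet_Ioi hderiv hinj
    (fun t => 1/(t*Real.sqrt t) * Real.exp (-(x*Real.sqrt t - 1/(2*Real.sqrt t))^2))
  rw [himg] at key
  rw [key]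
  apply setIntegral_congr_fun measurableSet_Ioi
  intro t ht
  have ht0 : (0:ℝ) < t := ht
  have hst : 0 < Real.sqrt t := Real.sqrt_pos.2 ht0
  have hsq : Real.sqrt t * Real.sqrt t = t := Real.mul_self_sqrt ht0.le
  have hψt : ψ t = 1/(4*x^2*t) := by simp only [hψ]; field_simp
  have hsψ : Real.sqrt (ψ t) = 1/(2*x*Real.sqrt t) := by
    rw [hψt, show 1/(4*x^2*t) = (1/(2*x*Real.sqrt t))^2 by field_simp; ring_nf; nlinarith [hsq]]
    exact Real.sqrt_sq (by positivity)
  have habs : |1/(4*x^2) * (-(t^2)⁻¹)| = 1/(4*x^2*t^2) := by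
    rw [show 1/(4*x^2) * (-(t^2)⁻¹) = -(1/(4*x^2*t^2)) by field_simp, abs_neg,
      abs_of_pos (by positivity)]
  simp only [smul_eq_mul]
  rw [habs, hsψ, hψt]
  have hphi : x * (1/(2*x*Real.sqrt t)) - 1/(2*(1/(2*x*Real.sqrt t)))
      = -(x*Real.sqrt t - 1/(2*Real.sqrt t)) := by
    field_simp
    ring_nf
  rw [hphi, neg_sq]
  have hc : 1/(4*x^2*t^2) * (1/(1/(4*x^2*t) * (1/(2*x*Real.sqrt t)))) = 2*x/Real.sqrt t := by
    field_simp
    ring_nf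
    linear_combination (1) * Real.sq_sqrt ht0.le
  rw [← mul_assoc, hc]

lemma Aval (x : ℝ) (hx : 0 ≤ x) :
    ∫ t in Ioi (0:ℝ), 1/(t*Real.sqrt t) * Real.exp (-(x*Real.sqrt t - 1/(2*Real.sqrt t))^2)
      = 2 * Real.sqrt Real.pi := by
  have hderiv : ∀ t ∈ Ioi (0:ℝ), HasDerivWithinAt (fun s => x * Real.sqrt s - 1/(2*Real.sqrt s))
      (x/(2*Real.sqrt t) + 1/(4*t*Real.sqrt t)) (Ioi 0) t :=
    fun t ht => (phi_hasDeriv x t ht).hasDerivWithinAt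
  have hinj := phi_injOn x hx
  have hgauss : Integrable (fun u : ℝ => Real.exp (-u^2)) := by
    simpa using integrable_exp_neg_mul_sq (one_pos)
  have key := integral_image_eq_integral_abs_deriv_smul measurableSet_Ioi hderiv hinj
    (fun u => Real.exp (-u^2))
  have hInt : IntegrableOn
      (fun t => |x/(2*Real.sqrt t) + 1/(4*t*Real.sqrt t)| *
        Real.exp (-(x*Real.sqrt t - 1/(2*Real.sqrt t))^2)) (Ioi 0) := by
    have := (integrableOn_image_iff_integrableOn_abs_deriv_smul measurableSet_Ioi hderiv hinj
      (fun u => Real.exp (-u^2))).1 hgauss.integrableOn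
    simpa [smul_eq_mul] using this
  have habs : ∀ t ∈ Ioi (0:ℝ), |x/(2*Real.sqrt t) + 1/(4*t*Real.sqrt t)| *
        Real.exp (-(x*Real.sqrt t - 1/(2*Real.sqrt t))^2)
      = (1/4) * (2*x/Real.sqrt t * Real.exp (-(x*Real.sqrt t - 1/(2*Real.sqrt t))^2)
          + 1/(t*Real.sqrt t) * Real.exp (-(x*Real.sqrt t - 1/(2*Real.sqrt t))^2)) := by
    intro t ht
    have ht0 : (0:ℝ) < t := ht
    have hst : 0 < Real.sqrt t := Real.sqrt_pos.2 ht0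
    have h2 : 0 ≤ x/(2*Real.sqrt t) := div_nonneg hx (by positivity)
    have h3 : 0 < 1/(4*t*Real.sqrt t) := by positivity
    rw [abs_of_pos (by linarith)]
    field_simp
    ring
  -- rewrite key's RHS
  have key2 : ∫ u in (fun t => x * Real.sqrt t - 1/(2*Real.sqrt t)) '' Ioi 0, Real.exp (-u^2)
      = ∫ t in Ioi (0:ℝ), (1/4) * (2*x/Real.sqrt t * Real.exp (-(x*Real.sqrt t - 1/(2*Real.sqrt t))^2)
          + 1/(t*Real.sqrt t) * Real.exp (-(x*Real.sqrt t - 1/(2*Real.sqrt t))^2)) := by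
    rw [key]
    apply setIntegral_congr_fun measurableSet_Ioi
    intro t ht
    simpa [smul_eq_mul] using habs t ht
  rcases eq_or_lt_of_le hx with hx0 | hxpos
  · -- x = 0
    subst hx0
    rw [phi_image_zero] at key2
    have hval : ∫ u in Iio (0:ℝ), Real.exp (-u^2) = Real.sqrt Real.pi / 2 := by
      have h := integral_comp_neg_Ioi (c := (0:ℝ)) (fun u => Real.exp (-u^2))
      simp only [neg_neg, neg_sq, neg_zero] at h
      rw [← MeasureTheory.integral_Iic_eq_integral_Iio, ← h]
      simpa using integral_gaussian_Ioi 1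
    rw [hval] at key2
    have key3 : ∫ t in Ioi (0:ℝ), (1/4) * (2*(0:ℝ)/Real.sqrt t * Real.exp (-((0:ℝ)*Real.sqrt t - 1/(2*Real.sqrt t))^2)
          + 1/(t*Real.sqrt t) * Real.exp (-((0:ℝ)*Real.sqrt t - 1/(2*Real.sqrt t))^2))
        = ∫ t in Ioi (0:ℝ), (1/4) * (1/(t*Real.sqrt t) * Real.exp (-((0:ℝ)*Real.sqrt t - 1/(2*Real.sqrt t))^2)) := by
      apply setIntegral_congr_fun measurableSet_Ioi
      intro t ht
      ring
    rw [key3, integral_const_mul] at key2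
    linarith
  · -- 0 < x
    have himg := phi_image_pos x hxpos
    rw [himg] at key2
    have hval : ∫ u in (univ : Set ℝ), Real.exp (-u^2) = Real.sqrt Real.pi := by
      rw [Measure.restrict_univ]
      simpa using integral_gaussian 1
    rw [hval] at key2
    -- integrability of the two pieces
    have hsum_int : IntegrableOn (fun t => 2*x/Real.sqrt t * Real.exp (-(x*Real.sqrt t - 1/(2*Real.sqrt t))^2)
        + 1/(t*Real.sqrt t) * Real.exp (-(x*Real.sqrt t - 1/(2*Real.sqrt t))^2)) (Ioi 0) := by
      have h4 := hInt.const_mul 4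
      apply IntegrableOn.congr_fun h4 ?_ measurableSet_Ioi
      intro t ht
      have := habs t ht
      dsimp only
      rw [this]
      ring
    have hm_base : Measurable (fun t:ℝ => Real.exp (-(x*Real.sqrt t - 1/(2*Real.sqrt t))^2)) := by
      apply Real.measurable_exp.comp
      apply Measurable.neg
      apply Measurable.pow_const
      exact (Real.continuous_sqrt.measurable.const_mul x).sub
        (measurable_const.div (Real.continuous_sqrt.measurable.const_mul 2))
    have hmeas_f : AEStronglyMeasurable
        (fun t => 1/(t*Real.sqrt t) * Real.exp (-(x*Real.sqrt t - 1/(2*Real.sqrt t))^2))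
        (volume.restrict (Ioi 0)) :=
      ((measurable_const.div (measurable_id.mul Real.continuous_sqrt.measurable)).mul hm_base).aestronglyMeasurable
    have hmeas_g : AEStronglyMeasurable
        (fun t => 2*x/Real.sqrt t * Real.exp (-(x*Real.sqrt t - 1/(2*Real.sqrt t))^2))
        (volume.restrict (Ioi 0)) :=
      ((measurable_const.div Real.continuous_sqrt.measurable).mul hm_base).aestronglyMeasurable
    have hnonneg_f : ∀ t ∈ Ioi (0:ℝ), 0 ≤ 1/(t*Real.sqrt t) * Real.exp (-(x*Real.sqrt t - 1/(2*Real.sqrt t))^2) := by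
      intro t ht
      have ht0 : (0:ℝ) < t := ht
      have hst : 0 < Real.sqrt t := Real.sqrt_pos.2 ht0
      positivity
    have hnonneg_g : ∀ t ∈ Ioi (0:ℝ), 0 ≤ 2*x/Real.sqrt t * Real.exp (-(x*Real.sqrt t - 1/(2*Real.sqrt t))^2) := by
      intro t ht
      have ht0 : (0:ℝ) < t := ht
      have hst : 0 < Real.sqrt t := Real.sqrt_pos.2 ht0
      positivity
    have hf_int : IntegrableOn (fun t => 1/(t*Real.sqrt t) * Real.exp (-(x*Real.sqrt t - 1/(2*Real.sqrt t))^2)) (Ioi 0) := by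
      apply hsum_int.mono' hmeas_f
      rw [ae_restrict_iff' measurableSet_Ioi]
      filter_upwards with t
      intro ht
      rw [Real.norm_eq_abs, abs_of_nonneg (hnonneg_f t ht)]
      have := hnonneg_g t ht
      linarith
    have hg_int : IntegrableOn (fun t => 2*x/Real.sqrt t * Real.exp (-(x*Real.sqrt t - 1/(2*Real.sqrt t))^2)) (Ioi 0) := by
      apply hsum_int.mono' hmeas_g
      rw [ae_restrict_iff' measurableSet_Ioi]
      filter_upwards with t
      intro ht
      rw [Real.norm_eq_abs, abs_of_nonneg (hnonneg_g t ht)]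
      have := hnonneg_f t ht
      linarith
    rw [integral_const_mul, integral_add hg_int hf_int, ← psi_eq x hxpos] at key2
    linarith [key2]

theorem subordination_formula (x : ℝ) (hx : 0 ≤ x) :
    Real.exp (-x) =
      (4 * Real.pi) ^ (-(1:ℝ)/2) *
        ∫ t in Set.Ioi (0:ℝ), t ^ (-(3:ℝ)/2) * Real.exp (-1/(4*t) - t * x^2) := by
  have hcongr : ∫ t in Ioi (0:ℝ), t ^ (-(3:ℝ)/2) * Real.exp (-1/(4*t) - t * x^2)
      = ∫ t in Ioi (0:ℝ), Real.exp (-x) *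
          (1/(t*Real.sqrt t) * Real.exp (-(x*Real.sqrt t - 1/(2*Real.sqrt t))^2)) := by
    apply setIntegral_congr_fun measurableSet_Ioi
    intro t ht
    have ht0 : (0:ℝ) < t := ht
    have hst : 0 < Real.sqrt t := Real.sqrt_pos.2 ht0
    have hsq : Real.sqrt t ^ 2 = t := Real.sq_sqrt ht0.le
    have h1 : t ^ (-(3:ℝ)/2) = 1/(t*Real.sqrt t) := by
      rw [show (-(3:ℝ)/2) = -(1 + 1/2) by ring, Real.rpow_neg ht0.le,
        Real.rpow_add ht0, Real.rpow_one, ← Real.sqrt_eq_rpow, one_div]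
    have h2 : -1/(4*t) - t*x^2 = -x + -(x*Real.sqrt t - 1/(2*Real.sqrt t))^2 := by
      field_simp
      ring_nf
      linear_combination (16*t*x^2*Real.sqrt t^2 - 4) * hsq
    dsimp only
    rw [h1, h2, Real.exp_add]
    ring
  rw [hcongr, integral_const_mul, Aval x hx]
  have hpow : (4*Real.pi) ^ (-(1:ℝ)/2) = (2*Real.sqrt Real.pi)⁻¹ := by
    rw [show (4:ℝ)*Real.pi = (2*Real.sqrt Real.pi)^2 by
      rw [mul_pow, Real.sq_sqrt Real.pi_pos.le]; ring]
    rw [← Real.rpow_natCast (2*Real.sqrt Real.pi) 2, ← Real.rpow_mul (by positivity)]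
    norm_num
    rw [Real.rpow_neg_one, mul_inv]
    ring
  rw [hpow]
  have hne : (2*Real.sqrt Real.pi) ≠ 0 := by positivity
  field_simp
end

section
/- For real x with 0 < |x| < π, coth x = 1/x + ∑_{k=1}^∞ (2^{2k} B_{2k} / (2k)!) x^{2k-1}. -/
open Real Finset

/-- Bound on Bernoulli numbers from zeta values. -/
lemma bernoulli_abs_le (k : ℕ) (hk : k ≠ 0) :
    |(bernoulli (2 * k) : ℝ)| / (2 * k).factorial ≤ 2 / (2 ^ (2 * k - 1) * π ^ (2 * k)) := by
  have hz := hasSum_zeta_nat hk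
  have hz2 := hasSum_zeta_two
  have hnn : ∀ n : ℕ, (0 : ℝ) ≤ 1 / (n : ℝ) ^ (2 * k) := by
    intro n; positivity
  have hpos : (0 : ℝ) ≤ (-1 : ℝ) ^ (k + 1) * (2 : ℝ) ^ (2 * k - 1) * π ^ (2 * k) *
      bernoulli (2 * k) / (2 * k).factorial := hz.nonneg hnn
  have hle : (-1 : ℝ) ^ (k + 1) * (2 : ℝ) ^ (2 * k - 1) * π ^ (2 * k) *
      bernoulli (2 * k) / (2 * k).factorial ≤ π ^ 2 / 6 := by
    refine hasSum_le (fun n => ?_) hz hz2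
    rcases Nat.eq_zero_or_pos n with rfl | hn
    · rw [Nat.cast_zero, zero_pow (by omega : 2 * k ≠ 0), zero_pow two_ne_zero]
    · have h1 : (1 : ℝ) ≤ (n : ℝ) := by exact_mod_cast hn
      gcongr
      · omega
  have hc : 0 ≤ (-1:ℝ) ^ (k + 1) * bernoulli (2 * k) := by
    have hfac : (0:ℝ) < (2 * k).factorial := by positivity
    have hcoefp : (0:ℝ) < 2 ^ (2 * k - 1) * π ^ (2 * k) := by positivity
    by_contra hcon
    push_neg at hcon
    have hneg : (-1:ℝ) ^ (k + 1) * 2 ^ (2 * k - 1) * π ^ (2 * k) *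
        bernoulli (2 * k) / (2 * k).factorial < 0 := by
      apply div_neg_of_neg_of_pos _ hfac
      nlinarith
    linarith
  have hB : |(bernoulli (2 * k) : ℝ)| = (-1:ℝ) ^ (k + 1) * bernoulli (2 * k) := by
    rw [← abs_of_nonneg hc, abs_mul, abs_pow, abs_neg, abs_one, one_pow, one_mul]
  have hcoefne : ((2:ℝ) ^ (2 * k - 1) * π ^ (2 * k)) ≠ 0 := by positivity
  have habs : |(bernoulli (2 * k) : ℝ)| / (2 * k).factorial =
      ((-1 : ℝ) ^ (k + 1) * (2 : ℝ) ^ (2 * k - 1) * π ^ (2 * k) *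
        bernoulli (2 * k) / (2 * k).factorial) / (2 ^ (2 * k - 1) * π ^ (2 * k)) := by
    rw [hB]
    field_simp
  rw [habs]
  have hpi2 : π ^ 2 / 6 ≤ 2 := by nlinarith [Real.pi_lt_d2, Real.pi_pos]
  have hcoefpos : (0:ℝ) < 2 ^ (2 * k - 1) * π ^ (2 * k) := by positivity
  gcongr
  exact hle.trans hpi2

/-- The Bernoulli exponential generating function identity. -/
lemma bernoulli_hasSum (t : ℝ) (ht : |t| < 2 * π) (ht0 : t ≠ 0) :
    HasSum (fun n : ℕ => (bernoulli n : ℝ) / n.factorial * t ^ n)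
      (t / (Real.exp t - 1)) := by
  set f : ℕ → ℝ := fun n => (bernoulli n : ℝ) / n.factorial * t ^ n with hf_def
  set r : ℝ := |t| / (2 * π) with hr_def
  have hπ : (0:ℝ) < π := Real.pi_pos
  have hr0 : 0 ≤ r := by positivity
  have hr1 : r < 1 := by
    rw [hr_def, div_lt_one (by positivity)]; exact ht
  -- summability of ‖f‖
  have hfnorm : Summable fun n => ‖f n‖ := by
    have hv : Summable fun n : ℕ => 4 * r ^ n + (if n = 1 then |t| else 0) := by
      exact ((summable_geometric_of_lt_one hr0 hr1).mul_left 4).add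
        (hasSum_ite_eq 1 |t|).summable
    refine Summable.of_nonneg_of_le (fun n => norm_nonneg _) (fun n => ?_) hv
    rcases Nat.even_or_odd n with ⟨k, hk⟩ | ⟨k, hk⟩
    · -- n = 2k
      have hn : n = 2 * k := by omega
      subst hn
      rcases Nat.eq_zero_or_pos k with rfl | hkpos
      · have h0 : f (2 * 0) = 1 := by norm_num [f]
        rw [h0]
        norm_num
      · have hb := bernoulli_abs_le k (by omega)
        have : ‖f (2 * k)‖ = |(bernoulli (2 * k) : ℝ)| / (2 * k).factorial * |t| ^ (2 * k) := by
          simp only [f, Real.norm_eq_abs, abs_mul, abs_div, Nat.abs_cast, abs_pow]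
        rw [this]
        have h1 : |(bernoulli (2 * k) : ℝ)| / (2 * k).factorial * |t| ^ (2 * k) ≤
            2 / (2 ^ (2 * k - 1) * π ^ (2 * k)) * |t| ^ (2 * k) := by
          gcongr
        refine h1.trans ?_
        have h2 : 2 / ((2:ℝ) ^ (2 * k - 1) * π ^ (2 * k)) * |t| ^ (2 * k) = 4 * r ^ (2 * k) := by
          rw [hr_def, div_pow, mul_pow]
          have h2k : 2 * k - 1 + 1 = 2 * k := by omega
          have : (2:ℝ) ^ (2 * k) = 2 * 2 ^ (2 * k - 1) := by
            rw [← pow_succ']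
            rw [h2k]
          field_simp
          rw [this]; ring
        rw [h2]
        have : (0:ℝ) ≤ if 2 * k = 1 then |t| else 0 := by positivity
        linarith
    · -- n odd
      have hn : n = 2 * k + 1 := by omega
      subst hn
      rcases Nat.eq_zero_or_pos k with rfl | hkpos
      · simp only [f]
        norm_num [bernoulli_one]
        linarith [abs_nonneg t, hr0]
      · have hodd : Odd (2 * k + 1) := ⟨k, by omega⟩
        have hno : bernoulli (2 * k + 1) = 0 := by
          rw [bernoulli_eq_bernoulli'_of_ne_one (by omega)]
          exact bernoulli'_eq_zero_of_odd hodd (by omega)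
        simp only [f, hno]
        simp
        positivity
  have hf : HasSum f (∑' n, f n) := hfnorm.of_norm.hasSum
  -- the (exp t - 1) series
  set g : ℕ → ℝ := fun m => if m = 0 then 0 else t ^ m / m.factorial with hg_def
  have hexp : HasSum (fun n : ℕ => t ^ n / n.factorial) (Real.exp t) := by
    rw [Real.exp_eq_exp_ℝ]
    exact NormedSpace.expSeries_div_hasSum_exp t
  have hg : HasSum g (Real.exp t - 1) := by
    have := hexp.update 0 0
    have heq : Function.update (fun n : ℕ => t ^ n / n.factorial) 0 0 = g := by
      funext m
      rcases eq_or_ne m 0 with rfl | hm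
      · simp [g]
      · simp [g, Function.update_apply, hm]
    rw [heq] at this
    convert this using 1
    case e'_3 => rfl
    have h0 : ((Nat.factorial 0 : ℕ) : ℝ) = 1 := by norm_num
    rw [h0]
    ring
  have hgnorm : Summable fun m => ‖g m‖ := by
    refine Summable.of_nonneg_of_le (fun n => norm_nonneg _) (fun n => ?_)
      (Real.summable_pow_div_factorial |t|)
    rcases eq_or_ne n 0 with rfl | hn
    · simp [g]
    · simp only [g, if_neg hn, Real.norm_eq_abs, abs_div, Nat.abs_cast, abs_pow]
      exact le_refl _
  -- Cauchy product
  have hC := hasSum_sum_range_mul_of_summable_norm hfnorm hgnorm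
  rw [hg.tsum_eq] at hC
  -- identify the Cauchy coefficients
  have hcoef : ∀ n : ℕ, (∑ k ∈ range (n + 1), f k * g (n - k)) =
      if n = 1 then t else 0 := by
    intro n
    rw [Finset.sum_range_succ]
    have hlast : f n * g (n - n) = 0 := by simp [g]
    rw [hlast, add_zero]
    have hterm : ∀ k ∈ range n, f k * g (n - k) =
        ((n.choose k : ℝ) * (bernoulli k : ℝ)) * (t ^ n / n.factorial) := by
      intro k hk
      rw [Finset.mem_range] at hk
      have hnk : n - k ≠ 0 := by omega
      simp only [f, g, if_neg hnk]
      have hpow : t ^ k * t ^ (n - k) = t ^ n := by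
        rw [← pow_add]; congr 1; omega
      have hfact : (n.choose k : ℝ) * k.factorial * (n - k).factorial = n.factorial := by
        exact_mod_cast congrArg (Nat.cast : ℕ → ℝ)
          (Nat.choose_mul_factorial_mul_factorial hk.le)
      have hk0 : (k.factorial : ℝ) ≠ 0 := by positivity
      have hnk0 : ((n - k).factorial : ℝ) ≠ 0 := by positivity
      have hn0 : (n.factorial : ℝ) ≠ 0 := by positivity
      field_simp
      rw [← hfact, ← hpow]
      ring
    rw [Finset.sum_congr rfl hterm, ← Finset.sum_mul]
    have hsum : (∑ k ∈ range n, (n.choose k : ℝ) * (bernoulli k : ℝ)) =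
        if n = 1 then 1 else 0 := by
      have hq := sum_bernoulli n
      calc (∑ k ∈ range n, (n.choose k : ℝ) * (bernoulli k : ℝ))
          = ((∑ k ∈ range n, (n.choose k : ℚ) * bernoulli k : ℚ) : ℝ) := by push_cast; rfl
        _ = ((if n = 1 then (1:ℚ) else 0 : ℚ) : ℝ) := by rw [hq]
        _ = if n = 1 then (1:ℝ) else 0 := by split <;> simp
    rw [hsum]
    rcases eq_or_ne n 1 with rfl | hn
    · simp
    · simp [hn]
  have hCt : HasSum (fun n : ℕ => if n = 1 then t else 0)
      ((∑' n, f n) * (Real.exp t - 1)) := by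
    refine HasSum.congr_fun hC fun n => (hcoef n).symm
  have ht' : HasSum (fun n : ℕ => if n = 1 then t else 0) t := hasSum_ite_eq 1 t
  have hA : (∑' n, f n) * (Real.exp t - 1) = t := hCt.unique ht'
  have hexpne : Real.exp t - 1 ≠ 0 := by
    intro h
    have : Real.exp t = 1 := by linarith
    exact ht0 ((Real.exp_eq_one_iff t).mp this)
  have : (∑' n, f n) = t / (Real.exp t - 1) := by
    field_simp
    linarith [hA]
  rwa [this] at hf

theorem coth_taylor (x : ℝ) (hx0 : 0 < |x|) (hx : |x| < Real.pi) :
    HasSum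
      (fun k : ℕ =>
        (2 ^ (2 * (k + 1)) * (bernoulli (2 * (k + 1)) : ℝ) /
            (Nat.factorial (2 * (k + 1)))) * x ^ (2 * (k + 1) - 1))
      (Real.cosh x / Real.sinh x - 1 / x) := by
  have hxne : x ≠ 0 := abs_pos.mp hx0
  have hπ : (0:ℝ) < π := Real.pi_pos
  have ht : |2 * x| < 2 * π := by
    rw [abs_mul, abs_two]; linarith
  have ht0 : (2 : ℝ) * x ≠ 0 := by simp [hxne]
  have h1 := bernoulli_hasSum (2 * x) ht ht0
  set f : ℕ → ℝ := fun n => (bernoulli n : ℝ) / n.factorial * (2 * x) ^ n with hf_def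
  set S : ℝ := 2 * x / (Real.exp (2 * x) - 1) with hS_def
  -- kill the n = 1 term
  have h2 := h1.update 1 0
  have hf1 : f 1 = -x := by
    simp [f, bernoulli_one]
    ring
  rw [hf1] at h2
  set F : ℕ → ℝ := Function.update f 1 0 with hF_def
  -- restrict to even indices
  have hinj : Function.Injective (fun k : ℕ => 2 * k) := fun a b h => by
    have h' : 2 * a = 2 * b := h
    omega
  have hsupp : ∀ n ∉ Set.range (fun k : ℕ => 2 * k), F n = 0 := by
    intro n hn
    have hodd : Odd n := by
      rcases Nat.even_or_odd n with ⟨k, hk⟩ | h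
      · exact absurd ⟨k, show 2 * k = n by omega⟩ hn
      · exact h
    obtain ⟨k, hk⟩ := hodd
    rcases Nat.eq_zero_or_pos k with rfl | hkpos
    · simp only [hF_def]
      rw [show n = 1 by omega]
      simp [Function.update_apply]
    · have hn1 : n ≠ 1 := by omega
      simp only [hF_def, Function.update_apply, if_neg hn1, f]
      rw [bernoulli_eq_bernoulli'_of_ne_one (by omega),
        bernoulli'_eq_zero_of_odd ⟨k, hk⟩ (by omega)]
      simp
  have h3 : HasSum (fun k : ℕ => F (2 * k)) (0 - -x + S) :=
    (hinj.hasSum_iff hsupp).mpr h2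
  have hF2 : ∀ k : ℕ, F (2 * k) = (bernoulli (2 * k) : ℝ) / (2 * k).factorial * (2 * x) ^ (2 * k) := by
    intro k
    have : 2 * k ≠ 1 := by omega
    simp [hF_def, Function.update_apply, this, f]
  have h3' : HasSum (fun k : ℕ =>
      (bernoulli (2 * k) : ℝ) / (2 * k).factorial * (2 * x) ^ (2 * k)) (S + x) := by
    have := h3
    simp only [hF2] at this
    convert this using 1
    ring
  -- drop the k = 0 term (which is 1)
  have h4 : HasSum (fun k : ℕ =>
      (bernoulli (2 * (k + 1)) : ℝ) / (2 * (k + 1)).factorial * (2 * x) ^ (2 * (k + 1)))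
      (S + x - 1) := by
    have h40 := (hasSum_nat_add_iff' (f := fun k : ℕ =>
      (bernoulli (2 * k) : ℝ) / (2 * k).factorial * (2 * x) ^ (2 * k)) 1).mpr h3'
    have hzero : (∑ i ∈ Finset.range 1,
        (bernoulli (2 * i) : ℝ) / (2 * i).factorial * (2 * x) ^ (2 * i)) = 1 := by
      simp
    rw [hzero] at h40
    exact h40
  -- divide by x
  have h5 := h4.div_const x
  have hterm : ∀ k : ℕ,
      (bernoulli (2 * (k + 1)) : ℝ) / (2 * (k + 1)).factorial * (2 * x) ^ (2 * (k + 1)) / x =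
      (2 ^ (2 * (k + 1)) * (bernoulli (2 * (k + 1)) : ℝ) /
          (Nat.factorial (2 * (k + 1)))) * x ^ (2 * (k + 1) - 1) := by
    intro k
    have h2k : 2 * (k + 1) - 1 + 1 = 2 * (k + 1) := by omega
    have hxpow : x ^ (2 * (k + 1)) = x ^ (2 * (k + 1) - 1) * x := by
      rw [← pow_succ, h2k]
    rw [mul_pow, hxpow]
    field_simp
  have hval : (S + x - 1) / x = Real.cosh x / Real.sinh x - 1 / x := by
    rw [hS_def, Real.cosh_eq, Real.sinh_eq]
    have hE : Real.exp (2 * x) = Real.exp x * Real.exp x := by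
      rw [two_mul, Real.exp_add]
    have hEpos : 0 < Real.exp x := Real.exp_pos x
    have hEne : Real.exp x ≠ 0 := hEpos.ne'
    have hsinh : Real.exp x - Real.exp (-x) ≠ 0 := by
      intro h
      have : Real.sinh x = 0 := by rw [Real.sinh_eq, h]; simp
      exact hxne (Real.sinh_eq_zero.mp this)
    have hE2 : Real.exp (2 * x) - 1 ≠ 0 := by
      intro h
      have : Real.exp (2 * x) = 1 := by linarith
      have := (Real.exp_eq_one_iff (2 * x)).mp this
      exact hxne (by linarith)
    have hnegx : Real.exp (-x) = (Real.exp x)⁻¹ := Real.exp_neg x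
    rw [hE, hnegx] at *
    have hE2' : Real.exp x ^ 2 - 1 ≠ 0 := by rw [pow_two]; exact hE2
    field_simp
    ring
  rw [hval] at h5
  exact h5.congr_fun fun k => (hterm k).symm
end
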